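/- If A(a) and B(b) are local observables with ⟨A(a)⟩_ψ = ⟨B(b)⟩_ψ = 0 on a maximally entangled state ψ, then the Pearson correlation coefficient r(A,B) = ⟨A(a)B(b)⟩_ψ / √(⟨A(a)²⟩_ψ ⟨B(b)²⟩_ψ) equals (a/‖a‖) · (b/‖b‖). In particular r = 1 when b = a and r = −1 when b = −a. -/

import Mathlib

open Matrix Kronecker

/-- The maximally entangled state `(1/√N) ∑ⱼ |j⟩ ⊗ |j⟩`, in Schmidt-basis coordinates. -/
noncomputable def maxEnt (N : ℕ) : Fin N × Fin N → ℂ :=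
  fun p => if p.1 = p.2 then ((Real.sqrt N : ℂ))⁻¹ else 0

/-- Quantum expectation `⟨ψ| M |ψ⟩` on the maximally entangled state. -/
noncomputable def qExp (N : ℕ) (M : Matrix (Fin N × Fin N) (Fin N × Fin N) ℂ) : ℂ :=
  star (maxEnt N) ⬝ᵥ (M *ᵥ maxEnt N)

/-- The trace-orthonormal Hermitian basis `{F_k}` built from the Schmidt basis of `H_A`. -/
noncomputable def hermBasis (N : ℕ) (k : Fin N × Fin N) : Matrix (Fin N) (Fin N) ℂ :=
  if k.1 = k.2 then Matrix.single k.1 k.1 1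
  else if k.1 < k.2 then
    ((Real.sqrt 2 : ℂ))⁻¹ • (Matrix.single k.1 k.2 1 + Matrix.single k.2 k.1 1)
  else
    (Complex.I * ((Real.sqrt 2 : ℂ))⁻¹) •
      (Matrix.single k.2 k.1 1 - Matrix.single k.1 k.2 1)

/-- Alice's observable `A(a) = ∑ₖ aₖ Fₖ`. -/
noncomputable def Aop (N : ℕ) (a : Fin N × Fin N → ℝ) : Matrix (Fin N) (Fin N) ℂ :=
  ∑ k, (a k : ℂ) • hermBasis N k

/-- Bob's observable `B(b) = ∑ₖ bₖ Gₖ` with `Gₖ = Fₖᵀ` in the Schmidt bases. -/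
noncomputable def Bop (N : ℕ) (b : Fin N × Fin N → ℝ) : Matrix (Fin N) (Fin N) ℂ :=
  ∑ k, (b k : ℂ) • (hermBasis N k)ᵀ

/-- The Pearson correlation coefficient
`r(A,B) = ⟨A(a)B(b)⟩_ψ / √(⟨A(a)²⟩_ψ ⟨B(b)²⟩_ψ)` of two local observables
(these averages being real). -/
noncomputable def pearson (N : ℕ) (a b : Fin N × Fin N → ℝ) : ℂ :=
  qExp N (Aop N a ⊗ₖ Bop N b) /
    ((Real.sqrt ((qExp N ((Aop N a * Aop N a) ⊗ₖ 1)).re *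
      (qExp N ((1 : Matrix (Fin N) (Fin N) ℂ) ⊗ₖ (Bop N b * Bop N b))).re) : ℝ) : ℂ)

/-!
On the maximally entangled state, `⟨ψ| M ⊗ P |ψ⟩ = tr (M Pᵀ) / N`. Since `Gₖ = Fₖᵀ`, each of the
three averages in `r(A,B)` thereby becomes `tr (A(x) A(y)) / N` for suitable `x, y`, and trace
orthonormality of the `Fₖ` turns this into `⟪x, y⟫ / N`. The factors `1 / N` cancel in `r`,
leaving `⟪a, b⟫ / (‖a‖ ‖b‖)`.
-/

theorem Matrix.trace_single_mul_single {n R : Type*} [Fintype n] [DecidableEq n] [Semiring R]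
    (p q r s : n) (c d : R) :
    trace (single p q c * single r s d) = if q = r ∧ s = p then c * d else 0 := by
  simp [trace_single_mul, single_apply, eq_comm]

theorem EuclideanSpace.real_inner_eq_sum_mul {ι : Type*} [Fintype ι] (x y : EuclideanSpace ℝ ι) :
    inner ℝ x y = ∑ i, x i * y i := by
  simp [PiLp.inner_apply, mul_comm]

theorem trace_hermBasis_mul_hermBasis (N : ℕ) (k l : Fin N × Fin N) :
    trace (hermBasis N k * hermBasis N l) = if k = l then 1 else 0 := by
  have hsqrt2 : ((Real.sqrt 2 : ℂ))⁻¹ ^ 2 = 2⁻¹ := by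
    rw [inv_pow, ← Complex.ofReal_pow, Real.sq_sqrt zero_le_two]
    norm_num
  obtain ⟨k1, k2⟩ := k
  obtain ⟨l1, l2⟩ := l
  simp only [hermBasis, Prod.mk.injEq]
  split_ifs <;>
    simp only [Matrix.smul_mul, Matrix.mul_smul, add_mul, mul_add, sub_mul, mul_sub, trace_add,
      trace_sub, trace_smul, smul_eq_mul, trace_single_mul_single] <;>
    split_ifs <;> try omega
  all_goals ring_nf
  all_goals simp only [Complex.I_sq, hsqrt2]; norm_num

theorem trace_Aop_mul_Aop (N : ℕ) (a b : Fin N × Fin N → ℝ) :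
    trace (Aop N a * Aop N b) = ((∑ k, a k * b k : ℝ) : ℂ) := by
  simp only [Aop, Finset.sum_mul_sum, trace_sum, Matrix.smul_mul, Matrix.mul_smul, trace_smul,
    trace_hermBasis_mul_hermBasis, smul_eq_mul, mul_ite, mul_one, mul_zero, Finset.sum_ite_eq,
    Finset.mem_univ, if_true]
  push_cast
  exact Fintype.sum_congr _ _ fun k => mul_comm _ _

theorem Bop_eq_transpose_Aop (N : ℕ) (b : Fin N × Fin N → ℝ) : Bop N b = (Aop N b)ᵀ := by
  simp [Bop, Aop, transpose_sum]

theorem qExp_kronecker (N : ℕ) (M P : Matrix (Fin N) (Fin N) ℂ) :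
    qExp N (M ⊗ₖ P) = (N : ℂ)⁻¹ * trace (M * Pᵀ) := by
  have hsqrtN : ((Real.sqrt N : ℂ))⁻¹ * ((Real.sqrt N : ℂ))⁻¹ = (N : ℂ)⁻¹ := by
    rw [← mul_inv, ← Complex.ofReal_mul, Real.mul_self_sqrt (Nat.cast_nonneg N)]
    push_cast; ring
  simp only [qExp, dotProduct, Pi.star_apply, maxEnt, RCLike.star_def, apply_ite (starRingEnd ℂ),
    map_inv₀, Complex.conj_ofReal, map_zero, mulVec, kroneckerMap_apply, mul_ite, mul_zero,
    Fintype.sum_prod_type, Finset.sum_ite_eq, Finset.mem_univ, if_true, Finset.mul_sum, ite_mul,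
    zero_mul, Finset.sum_ite_irrel, Finset.sum_const_zero, ← hsqrtN, trace, diag_apply, mul_apply,
    transpose_apply]
  exact Fintype.sum_congr _ _ fun i => Fintype.sum_congr _ _ fun j => by ring

theorem qExp_Aop_kronecker_Bop (N : ℕ) (a b : Fin N × Fin N → ℝ) :
    qExp N (Aop N a ⊗ₖ Bop N b) = (((N : ℝ)⁻¹ * ∑ k, a k * b k : ℝ) : ℂ) := by
  rw [qExp_kronecker, Bop_eq_transpose_Aop, transpose_transpose, trace_Aop_mul_Aop]
  push_cast; rfl

theorem qExp_Aop_mul_Aop_kronecker_one (N : ℕ) (a : Fin N × Fin N → ℝ) :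
    qExp N ((Aop N a * Aop N a) ⊗ₖ 1) = (((N : ℝ)⁻¹ * ∑ k, a k * a k : ℝ) : ℂ) := by
  rw [qExp_kronecker, transpose_one, Matrix.mul_one, trace_Aop_mul_Aop]
  push_cast; rfl

theorem qExp_one_kronecker_Bop_mul_Bop (N : ℕ) (b : Fin N × Fin N → ℝ) :
    qExp N (1 ⊗ₖ (Bop N b * Bop N b)) = (((N : ℝ)⁻¹ * ∑ k, b k * b k : ℝ) : ℂ) := by
  rw [qExp_kronecker, Matrix.one_mul, Bop_eq_transpose_Aop, ← transpose_mul, transpose_transpose,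
    trace_Aop_mul_Aop]
  push_cast; rfl

theorem pearson_eq_inner_div_norm_mul_norm {N : ℕ} (hN : 0 < N)
    (a b : EuclideanSpace ℝ (Fin N × Fin N)) :
    pearson N a b = ((inner ℝ a b / (‖a‖ * ‖b‖) : ℝ) : ℂ) := by
  have hN_inv : (0 : ℝ) < (N : ℝ)⁻¹ := by positivity
  have hsqrt : √((N : ℝ)⁻¹ * ‖a‖ ^ 2 * ((N : ℝ)⁻¹ * ‖b‖ ^ 2)) = (N : ℝ)⁻¹ * (‖a‖ * ‖b‖) := by
    rw [← Real.sqrt_sq (by positivity : 0 ≤ (N : ℝ)⁻¹ * (‖a‖ * ‖b‖))]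
    congr 1
    ring
  rw [pearson, qExp_Aop_kronecker_Bop, qExp_Aop_mul_Aop_kronecker_one,
    qExp_one_kronecker_Bop_mul_Bop, Complex.ofReal_re, Complex.ofReal_re,
    ← EuclideanSpace.real_inner_eq_sum_mul, ← EuclideanSpace.real_inner_eq_sum_mul,
    ← EuclideanSpace.real_inner_eq_sum_mul, real_inner_self_eq_norm_sq, real_inner_self_eq_norm_sq,
    hsqrt, ← Complex.ofReal_div, mul_div_mul_left _ _ hN_inv.ne']

theorem pearson_eq_normalized_dot_general (N : ℕ) (hN : 1 ≤ N)
    (a b : EuclideanSpace ℝ (Fin N × Fin N)) (ha : a ≠ 0) :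
    pearson N a b = (((∑ k, a k * b k) / (‖a‖ * ‖b‖) : ℝ) : ℂ)
    ∧ pearson N a a = 1 ∧ pearson N a (-a) = -1 := by
  have hnorm : ‖a‖ * ‖a‖ ≠ 0 := by positivity
  refine ⟨?_, ?_, ?_⟩
  · rw [pearson_eq_inner_div_norm_mul_norm hN, EuclideanSpace.real_inner_eq_sum_mul]
  · rw [pearson_eq_inner_div_norm_mul_norm hN, real_inner_self_eq_norm_mul_norm, div_self hnorm,
      Complex.ofReal_one]
  · rw [← WithLp.ofLp_neg, pearson_eq_inner_div_norm_mul_norm hN, inner_neg_right, norm_neg,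
      real_inner_self_eq_norm_mul_norm, neg_div, div_self hnorm, Complex.ofReal_neg,
      Complex.ofReal_one]

/-- If `⟨A(a)⟩_ψ = ⟨B(b)⟩_ψ = 0` on the maximally entangled state, the Pearson
correlation coefficient equals `(a/‖a‖)·(b/‖b‖)`; in particular it is `1` for `b = a`
and `-1` for `b = -a`. -/
theorem pearson_eq_normalized_dot (N : ℕ) (hN : 1 ≤ N)
    (a b : EuclideanSpace ℝ (Fin N × Fin N)) (ha : a ≠ 0) (hb : b ≠ 0)
    (hA0 : qExp N (Aop N a ⊗ₖ (1 : Matrix (Fin N) (Fin N) ℂ)) = 0)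
    (hB0 : qExp N ((1 : Matrix (Fin N) (Fin N) ℂ) ⊗ₖ Bop N b) = 0) :
    pearson N a b = (((∑ k, a k * b k) / (‖a‖ * ‖b‖) : ℝ) : ℂ)
    ∧ pearson N a a = 1 ∧ pearson N a (-a) = -1 :=
  pearson_eq_normalized_dot_general N hN a b ha
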